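/- arXiv:math/0103024 — 2 statements merged into one kernel-verified Lean document; each statement's English description precedes it below -/
import Mathlib

section
/- q-analogue of partial fraction decomposition: Let r ≥ 1 and let t, y₁, …, y_r, z₁, …, z_r be complex numbers with z₁, …, z_r nonzero and pairwise distinct and with t z_l ≠ 1 for all l. Then ∏_{i=1}^r (1 − t z_i y_i)/(1 − t z_i) = y₁ y₂ ⋯ y_r + ∑_{l=1}^r [∏_{i=1}^r (1 − y_i z_i/z_l)] / [(1 − t z_l) ∏_{i≠l} (1 − z_i/z_l)]. -/
open scoped BigOperators

open Polynomial Finset in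
private lemma aux_natDegree_le {n : ℕ} (c : Fin n → ℂ) :
    (∏ i, (1 - Polynomial.C (c i) * Polynomial.X)).natDegree ≤ n := by
  refine le_trans (Polynomial.natDegree_prod_le _ _) ?_
  calc ∑ i : Fin n, ((1 : ℂ[X]) - Polynomial.C (c i) * Polynomial.X).natDegree
      ≤ ∑ _i : Fin n, 1 := by
        refine Finset.sum_le_sum fun i _ => ?_
        have h : (1 : ℂ[X]) - Polynomial.C (c i) * Polynomial.X
            = Polynomial.C (-(c i)) * Polynomial.X + Polynomial.C 1 := by
          simp only [Polynomial.C_neg, Polynomial.C_1]; ring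
        rw [h]
        exact Polynomial.natDegree_linear_le
    _ = n := by simp

open Polynomial Finset in
private lemma aux_coeff_top {n : ℕ} (c : Fin n → ℂ) :
    (∏ i, (1 - Polynomial.C (c i) * Polynomial.X)).coeff n = ∏ i, (-(c i)) := by
  have h := Polynomial.coeff_prod_of_natDegree_le (s := (Finset.univ : Finset (Fin n)))
    (fun i : Fin n => 1 - Polynomial.C (c i) * Polynomial.X) 1 ?_
  · simpa [Polynomial.coeff_one] using h
  · intro p _
    show ((1 : ℂ[X]) - Polynomial.C (c p) * Polynomial.X).natDegree ≤ 1
    have h : (1 : ℂ[X]) - Polynomial.C (c p) * Polynomial.X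
        = Polynomial.C (-(c p)) * Polynomial.X + Polynomial.C 1 := by
      simp only [Polynomial.C_neg, Polynomial.C_1]; ring
    rw [h]
    exact Polynomial.natDegree_linear_le

/-- A q-analogue of partial fraction decomposition. -/
theorem partial_fraction_decomposition
    (r : ℕ) (hr : 1 ≤ r) (t : ℂ) (y z : Fin r → ℂ)
    (hz : ∀ i, z i ≠ 0) (hzinj : Function.Injective z)
    (ht : ∀ l, t * z l ≠ 1) :
    (∏ i, (1 - t * z i * y i) / (1 - t * z i)) =
      (∏ i, y i) +
        ∑ l, (∏ i, (1 - y i * z i / z l)) /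
          ((1 - t * z l) * ∏ i ∈ Finset.univ.erase l, (1 - z i / z l)) := by
  classical
  set v : Fin r → ℂ := fun l => (z l)⁻¹ with hv
  have hz1 : ∀ l, (1 : ℂ) - t * z l ≠ 0 := fun l => sub_ne_zero.mpr (Ne.symm (ht l))
  have hzz : ∀ j l : Fin r, j ≠ l → (1 : ℂ) - z j / z l ≠ 0 := by
    intro j l hjl h
    apply hjl
    apply hzinj
    have h1 : z j / z l = 1 := (sub_eq_zero.mp h).symm
    exact (div_eq_one_iff_eq (hz l)).mp h1
  have hvinj : Set.InjOn v (Finset.univ : Finset (Fin r)) := by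
    intro a _ b _ hab
    exact hzinj (inv_injective hab)
  set P : Polynomial ℂ := ∏ i, (1 - Polynomial.C (z i * y i) * Polynomial.X) with hP
  set G : Polynomial ℂ := ∏ i, (1 - Polynomial.C (z i) * Polynomial.X) with hG
  set Q : Polynomial ℂ := P - Polynomial.C (∏ i, y i) * G with hQ
  have hQdeg : Q.degree < ((Finset.univ : Finset (Fin r)).card : ℕ) := by
    rw [Finset.card_univ, Fintype.card_fin]
    rw [Polynomial.degree_lt_iff_coeff_zero]
    intro m hm
    rcases eq_or_lt_of_le hm with hm | hm
    · have hm' : m = r := by exact_mod_cast hm.symm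
      subst hm'
      rw [hQ, Polynomial.coeff_sub, Polynomial.coeff_C_mul, hP, hG,
        aux_coeff_top, aux_coeff_top]
      have : ∏ i, (-(z i * y i)) = (∏ i, y i) * ∏ i, (-(z i)) := by
        rw [← Finset.prod_mul_distrib]
        congr 1; ext i; ring
      rw [this]; ring
    · have hm' : r < m := by exact_mod_cast hm
      apply Polynomial.coeff_eq_zero_of_natDegree_lt
      apply lt_of_le_of_lt _ hm'
      rw [hQ]
      refine le_trans (Polynomial.natDegree_sub_le _ _) ?_
      simp only [max_le_iff]
      constructor
      · exact aux_natDegree_le _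
      · calc (Polynomial.C (∏ i, y i) * G).natDegree
              ≤ (Polynomial.C (∏ i, y i)).natDegree + G.natDegree :=
            Polynomial.natDegree_mul_le
          _ ≤ 0 + r := add_le_add (le_of_eq (Polynomial.natDegree_C _))
              (by rw [hG]; exact aux_natDegree_le _)
          _ = r := by simp
  have key : Q = Lagrange.interpolate Finset.univ v (fun l => Q.eval (v l)) :=
    Lagrange.eq_interpolate hvinj hQdeg
  have keval := congrArg (Polynomial.eval t) key
  rw [Lagrange.interpolate_apply] at keval
  simp only [Polynomial.eval_finset_sum, Polynomial.eval_mul, Polynomial.eval_C,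
    Lagrange.basis, Polynomial.eval_prod, Lagrange.basisDivisor,
    Polynomial.eval_sub, Polynomial.eval_X] at keval
  -- evaluations
  have hPt : P.eval t = ∏ i, (1 - t * z i * y i) := by
    rw [hP, Polynomial.eval_prod]
    refine Finset.prod_congr rfl fun i _ => ?_
    simp; ring
  have hGt : G.eval t = ∏ i, (1 - t * z i) := by
    rw [hG, Polynomial.eval_prod]
    refine Finset.prod_congr rfl fun i _ => ?_
    simp; ring
  have hGtne : (∏ i, (1 - t * z i)) ≠ 0 :=
    Finset.prod_ne_zero_iff.mpr fun i _ => hz1 i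
  have hQl : ∀ l, Q.eval (v l) = ∏ i, (1 - y i * z i / z l) := by
    intro l
    have hGl : G.eval (v l) = 0 := by
      rw [hG, Polynomial.eval_prod]
      refine Finset.prod_eq_zero (Finset.mem_univ l) ?_
      simp [hv, mul_inv_cancel₀ (hz l)]
    rw [hQ, Polynomial.eval_sub, Polynomial.eval_mul, hGl, Polynomial.eval_C, mul_zero,
      sub_zero, hP, Polynomial.eval_prod]
    refine Finset.prod_congr rfl fun i _ => ?_
    simp [hv]
    ring
  have hvne : ∀ j l : Fin r, j ≠ l → v l - v j ≠ 0 := by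
    intro j l hjl h
    exact hjl (hzinj (inv_injective (sub_eq_zero.mp h))).symm
  have hbasis : ∀ l, (∏ j ∈ Finset.univ.erase l, ((v l - v j)⁻¹ * (t - v j))) =
      (∏ j ∈ Finset.univ.erase l, (1 - t * z j)) /
        (∏ j ∈ Finset.univ.erase l, (1 - z j / z l)) := by
    intro l
    rw [← Finset.prod_div_distrib]
    refine Finset.prod_congr rfl fun j hj => ?_
    have hjl : j ≠ l := (Finset.mem_erase.mp hj).1
    have h1 := hvne j l hjl
    have h2 := hzz j l hjl
    rw [hv] at h1 ⊢
    rw [inv_mul_eq_div, div_eq_div_iff h1 h2]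
    field_simp [hz j, hz l]
    ring
  have main : P.eval t = (∏ i, y i) * G.eval t +
      ∑ l, (∏ i, (1 - y i * z i / z l)) *
        ((∏ j ∈ Finset.univ.erase l, (1 - t * z j)) /
          (∏ j ∈ Finset.univ.erase l, (1 - z j / z l))) := by
    have hQt : Q.eval t = P.eval t - (∏ i, y i) * G.eval t := by
      rw [hQ, Polynomial.eval_sub, Polynomial.eval_mul, Polynomial.eval_C]
    rw [← sub_eq_iff_eq_add', ← hQt, keval]
    exact Finset.sum_congr rfl fun l _ => by rw [hQl l, hbasis l]
  have hBden : ∀ l : Fin r, (∏ j ∈ Finset.univ.erase l, (1 - z j / z l)) ≠ 0 :=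
    fun l => Finset.prod_ne_zero_iff.mpr fun j hj => hzz j l (Finset.mem_erase.mp hj).1
  have hBnum : ∀ l : Fin r, (∏ j ∈ Finset.univ.erase l, (1 - t * z j)) ≠ 0 :=
    fun l => Finset.prod_ne_zero_iff.mpr fun j _ => hz1 j
  calc (∏ i, (1 - t * z i * y i) / (1 - t * z i))
      = P.eval t / G.eval t := by rw [hPt, hGt, Finset.prod_div_distrib]
    _ = _ := by
        rw [main, add_div, hGt, mul_div_assoc, div_self hGtne, mul_one, Finset.sum_div]
        congr 1
        refine Finset.sum_congr rfl fun l _ => ?_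
        have hsplit : (∏ i, (1 - t * z i)) =
            (1 - t * z l) * ∏ j ∈ Finset.univ.erase l, (1 - t * z j) :=
          (Finset.mul_prod_erase _ _ (Finset.mem_univ l)).symm
        rw [hsplit]
        have h1 := hz1 l
        have h2 := hBnum l
        have h3 := hBden l
        field_simp
end

section
/- Extended partial fraction lemma: Let r ≥ 1 and let t, u, y₁, …, y_r, z₁, …, z_r be complex numbers with z₁, …, z_r nonzero and pairwise distinct, u ≠ 1, and t z_l ≠ 1 for all l, and set Y := y₁ y₂ ⋯ y_r. Then [(1 − uY)/(1 − u)] · ∏_{i=1}^r (1 − t z_i y_i)/(1 − t z_i) = Y + ∑_{l=1}^r [(1 − uY t z_l) ∏_{i=1}^r (1 − y_i z_i/z_l)] / [(1 − u)(1 − t z_l) ∏_{i≠l} (1 − z_i/z_l)]. -/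
/-!
As a polynomial in `t`, `∏ i, (1 - t * z i * y i)` has degree at most `r` and leading coefficient
`Y * ∏ i, (-z i)`. Lagrange interpolation at the nodes `(z l)⁻¹`, after removing that leading term,
expresses it as `Y * ∏ i, (1 - t * z i)` plus a combination of the products
`∏ i ≠ l, (1 - t * z i)`; dividing by `∏ i, (1 - t * z i)` gives the partial fraction expansion of
`∏ i, (1 - t * z i * y i) / (1 - t * z i)`, and its value at `t = 0` evaluates
`∑ l, ∏ i, (1 - y i * z i / z l) / ∏ i ≠ l, (1 - z i / z l)` as `1 - Y`. The theorem follows from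
these two identities by splitting `1 - u * Y * t * z l = (1 - u * Y) + u * Y * (1 - t * z l)`.
-/

open Polynomial Finset

namespace Lagrange

variable {F ι : Type*} [Field F] [DecidableEq ι] {s : Finset ι} {v : ι → F}

theorem eq_C_coeff_mul_nodal_add_interpolate (hvs : Set.InjOn v s) {p : F[X]}
    (hp : p.natDegree ≤ #s) :
    p = C (p.coeff #s) * nodal s v + interpolate s v (fun i => p.eval (v i)) := by
  have hlt : (p - C (p.coeff #s) * nodal s v).degree < #s := by
    refine (degree_lt_iff_coeff_zero _ _).mpr fun m hm => ?_
    rcases hm.lt_or_eq with hm | rfl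
    · have hnodal : (nodal s v).natDegree < m := natDegree_nodal (v := v) ▸ hm
      rw [coeff_sub, coeff_C_mul, coeff_eq_zero_of_natDegree_lt (hp.trans_lt hm),
        coeff_eq_zero_of_natDegree_lt hnodal, mul_zero, sub_zero]
    · rw [coeff_sub, coeff_C_mul, ← natDegree_nodal (v := v), nodal_monic.coeff_natDegree,
        natDegree_nodal, mul_one, sub_self]
  rw [← sub_eq_iff_eq_add', eq_interpolate_of_eval_eq _ hvs hlt fun i hi => ?_]
  rw [eval_sub, eval_mul, eval_nodal_at_node hi, mul_zero, sub_zero]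

theorem eval_eq_coeff_mul_prod_add_sum (hvs : Set.InjOn v s) {p : F[X]}
    (hp : p.natDegree ≤ #s) (x : F) :
    p.eval x = p.coeff #s * ∏ i ∈ s, (x - v i) +
      ∑ i ∈ s, p.eval (v i) * ∏ j ∈ s.erase i, (x - v j) / (v i - v j) := by
  conv_lhs => rw [eq_C_coeff_mul_nodal_add_interpolate hvs hp]
  simp [interpolate_apply, Lagrange.basis, basisDivisor, eval_prod, eval_finsetSum, eval_nodal,
    div_eq_inv_mul]

end Lagrange

variable {K ι : Type*} [Field K] [Fintype ι]

theorem natDegree_one_sub_C_mul_X_le (a : K) : (1 - C a * X).natDegree ≤ 1 := by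
  compute_degree

theorem natDegree_prod_one_sub_C_mul_X_le (a : ι → K) :
    (∏ i, (1 - C (a i) * X)).natDegree ≤ #(univ : Finset ι) := by
  refine (natDegree_prod_le _ _).trans
    ((sum_le_sum fun i _ => ?_).trans_eq (card_eq_sum_ones _).symm)
  exact natDegree_one_sub_C_mul_X_le (a i)

theorem coeff_prod_one_sub_C_mul_X_card (a : ι → K) :
    (∏ i, (1 - C (a i) * X)).coeff #(univ : Finset ι) = ∏ i, -a i := by
  rw [← mul_one #univ,
    coeff_prod_of_natDegree_le _ _ 1 fun i _ => natDegree_one_sub_C_mul_X_le (a i)]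
  simp [coeff_one]

variable [DecidableEq ι]

theorem prod_one_sub_mul_mul_eq (t : K) (y : ι → K) {z : ι → K} (hz : ∀ i, z i ≠ 0)
    (hzinj : Function.Injective z) :
    ∏ i, (1 - t * z i * y i) = (∏ i, y i) * ∏ i, (1 - t * z i) +
      ∑ l, (∏ i, (1 - y i * z i / z l)) * ∏ i ∈ univ.erase l, (1 - t * z i) / (1 - z i / z l) := by
  have hvs : Set.InjOn (fun i => (z i)⁻¹) (univ : Finset ι) :=
    (inv_injective.comp hzinj).injOn
  have h := Lagrange.eval_eq_coeff_mul_prod_add_sum hvs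
    (natDegree_prod_one_sub_C_mul_X_le fun i => z i * y i) t
  rw [coeff_prod_one_sub_C_mul_X_card] at h
  simp only [eval_prod, eval_sub, eval_one, eval_mul, eval_C, eval_X] at h
  convert h using 2
  · ring
  · rw [← prod_mul_distrib, ← prod_mul_distrib]
    exact prod_congr rfl fun i _ => by field_simp [hz i]; ring
  · refine sum_congr rfl fun l _ => ?_
    congr 1
    · exact prod_congr rfl fun i _ => by field_simp [hz l]
    · refine prod_congr rfl fun i hi => ?_
      have hil : z i ≠ z l := hzinj.ne (ne_of_mem_erase hi)
      field_simp [hz i, hz l, sub_ne_zero.mpr hil, sub_ne_zero.mpr hil.symm]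
      ring

omit [Fintype ι] in
theorem prod_erase_one_sub_div_ne_zero (s : Finset ι) {z : ι → K} (hzinj : Function.Injective z)
    (l : ι) : ∏ i ∈ s.erase l, (1 - z i / z l) ≠ 0 := by
  refine prod_ne_zero_iff.mpr fun i hi => sub_ne_zero.mpr fun h => ?_
  by_cases hzl : z l = 0
  · simp [hzl] at h
  · exact ne_of_mem_erase hi (hzinj ((div_eq_one_iff_eq hzl).mp h.symm))

theorem prod_div_one_sub_mul_eq {t : K} (y : ι → K) {z : ι → K} (hz : ∀ i, z i ≠ 0)
    (hzinj : Function.Injective z) (ht : ∀ l, t * z l ≠ 1) :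
    ∏ i, (1 - t * z i * y i) / (1 - t * z i) = (∏ i, y i) +
      ∑ l, (∏ i, (1 - y i * z i / z l)) /
        ((1 - t * z l) * ∏ i ∈ univ.erase l, (1 - z i / z l)) := by
  have hD : ∀ i, 1 - t * z i ≠ 0 := fun i => sub_ne_zero.mpr (ht i).symm
  rw [prod_div_distrib, prod_one_sub_mul_mul_eq t y hz hzinj, add_div, sum_div, mul_div_assoc,
    div_self (prod_ne_zero_iff.mpr fun i _ => hD i), mul_one]
  refine congrArg _ (sum_congr rfl fun l _ => ?_)
  have hE : ∏ i ∈ univ.erase l, (1 - t * z i) ≠ 0 := prod_ne_zero_iff.mpr fun i _ => hD i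
  rw [← mul_prod_erase univ (fun i => 1 - t * z i) (mem_univ l), prod_div_distrib]
  field_simp [hD l, hE, prod_erase_one_sub_div_ne_zero univ hzinj l]

theorem sum_prod_one_sub_div_prod_erase_eq (y : ι → K) {z : ι → K} (hz : ∀ i, z i ≠ 0)
    (hzinj : Function.Injective z) :
    ∑ l, (∏ i, (1 - y i * z i / z l)) / ∏ i ∈ univ.erase l, (1 - z i / z l) = 1 - ∏ i, y i := by
  have h := prod_div_one_sub_mul_eq (t := 0) y hz hzinj fun l => by simp
  simp only [zero_mul, sub_zero, div_one, prod_const_one, one_mul] at h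
  exact eq_sub_of_add_eq' h.symm

theorem extended_partial_fraction_lemma_general
    (r : ℕ) (t u : ℂ) (y z : Fin r → ℂ)
    (hz : ∀ i, z i ≠ 0) (hzinj : Function.Injective z)
    (hu : u ≠ 1) (ht : ∀ l, t * z l ≠ 1) :
    (1 - u * ∏ i, y i) / (1 - u) * ∏ i, (1 - t * z i * y i) / (1 - t * z i) =
      (∏ i, y i) +
        ∑ l, ((1 - u * (∏ i, y i) * t * z l) * ∏ i, (1 - y i * z i / z l)) /
          ((1 - u) * (1 - t * z l) * ∏ i ∈ Finset.univ.erase l, (1 - z i / z l)) := by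
  set Y := ∏ i, y i
  have hu' : 1 - u ≠ 0 := sub_ne_zero.mpr hu.symm
  have hsplit : ∀ l, ((1 - u * Y * t * z l) * ∏ i, (1 - y i * z i / z l)) /
      ((1 - u) * (1 - t * z l) * ∏ i ∈ univ.erase l, (1 - z i / z l)) =
      (1 - u * Y) / (1 - u) * ((∏ i, (1 - y i * z i / z l)) /
        ((1 - t * z l) * ∏ i ∈ univ.erase l, (1 - z i / z l))) +
      u * Y / (1 - u) * ((∏ i, (1 - y i * z i / z l)) / ∏ i ∈ univ.erase l, (1 - z i / z l)) := by
    intro l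
    have hD : 1 - t * z l ≠ 0 := sub_ne_zero.mpr (ht l).symm
    field_simp [prod_erase_one_sub_div_ne_zero univ hzinj l]
    ring
  rw [sum_congr rfl fun l _ => hsplit l, sum_add_distrib, ← mul_sum, ← mul_sum,
    sum_prod_one_sub_div_prod_erase_eq y hz hzinj, prod_div_one_sub_mul_eq y hz hzinj ht]
  have hcollect : ∀ S : ℂ, (1 - u * Y) / (1 - u) * (Y + S) =
      Y + ((1 - u * Y) / (1 - u) * S + u * Y / (1 - u) * (1 - Y)) := fun S => by
    field_simp
    ring
  exact hcollect _

/-- Extended partial fraction lemma (Lemma `pbz` of the paper). -/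
theorem extended_partial_fraction_lemma
    (r : ℕ) (hr : 1 ≤ r) (t u : ℂ) (y z : Fin r → ℂ)
    (hz : ∀ i, z i ≠ 0) (hzinj : Function.Injective z)
    (hu : u ≠ 1) (ht : ∀ l, t * z l ≠ 1) :
    (1 - u * ∏ i, y i) / (1 - u) * ∏ i, (1 - t * z i * y i) / (1 - t * z i) =
      (∏ i, y i) +
        ∑ l, ((1 - u * (∏ i, y i) * t * z l) * ∏ i, (1 - y i * z i / z l)) /
          ((1 - u) * (1 - t * z l) * ∏ i ∈ Finset.univ.erase l, (1 - z i / z l)) :=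
  extended_partial_fraction_lemma_general r t u y z hz hzinj hu ht
end
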